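/- arXiv:1504.02355 — 6 statements merged into one kernel-verified Lean document; each statement's English description precedes it below -/
import Mathlib

section
/- Let A be a unital Banach algebra and let C : ℝ → A be a cosine family, i.e. C(0) = 1 and C(t+s) + C(t−s) = 2·C(t)·C(s) for all s, t ∈ ℝ. If limsup_{t→∞} ‖C(t) − 1‖ = 0 (equivalently, lim_{t→∞} ‖C(t) − 1‖ = 0), then C(t) = 1 for all t ∈ ℝ. -/
open scoped ENNReal

open Filter Topology

/-! Solving d'Alembert's equation for `C x` in terms of values at `t`, `t - x` and `2t - x`, and
letting `t → ∞`, shows that a cosine family converging to `a` at infinity is the constant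
`2a² - a`; for `a = 1` this constant is `1`. -/

theorem tendsto_nhds_zero_of_limsup_eq_zero {α : Type*} {l : Filter α} {u : α → ℝ≥0∞}
    (h : limsup u l = 0) : Tendsto u l (𝓝 0) :=
  tendsto_order.2
    ⟨fun _ ha => absurd ha not_lt_zero, fun _ ha => eventually_lt_of_limsup_lt (h ▸ ha)⟩

theorem tendsto_of_limsup_nnnorm_sub_eq_zero {α E : Type*} [SeminormedAddCommGroup E]
    {l : Filter α} {f : α → E} {a : E}
    (h : limsup (fun t => (‖f t - a‖₊ : ℝ≥0∞)) l = 0) : Tendsto f l (𝓝 a) := by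
  rw [tendsto_iff_edist_tendsto_0]
  simpa only [edist_eq_enorm_sub, enorm_eq_nnnorm] using tendsto_nhds_zero_of_limsup_eq_zero h

section Cosine

variable {R : Type*} [Ring R]

theorem eq_of_dAlembert {G : Type*} [AddCommGroup G] {C : G → R}
    (hC : ∀ s t, C (t + s) + C (t - s) = 2 * (C t * C s)) (x t : G) :
    C x = 2 * (C t * C (t - x)) - C (t + t - x) := by
  rw [add_sub_assoc t t x, ← hC (t - x) t, sub_sub_cancel, add_sub_cancel_left]

theorem eq_of_dAlembert_of_tendsto_atTop [TopologicalSpace R] [IsTopologicalRing R] [T2Space R]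
    {G : Type*} [AddCommGroup G] [LinearOrder G] [IsOrderedAddMonoid G] {C : G → R} {a : R}
    (hC : ∀ s t, C (t + s) + C (t - s) = 2 * (C t * C s))
    (hlim : Tendsto C atTop (𝓝 a)) (x : G) : C x = 2 * (a * a) - a := by
  have hshift : Tendsto (fun t : G => t - x) atTop atTop :=
    (tendsto_atTop_add_const_right _ (-x) tendsto_id).congr fun t => (sub_eq_add_neg t x).symm
  have hdouble : Tendsto (fun t : G => t + t - x) atTop atTop :=
    hshift.comp (tendsto_id.atTop_add_atTop tendsto_id)
  have hrhs : Tendsto (fun t => 2 * (C t * C (t - x)) - C (t + t - x)) atTop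
      (𝓝 (2 * (a * a) - a)) :=
    (tendsto_const_nhds.mul (hlim.mul (hlim.comp hshift))).sub (hlim.comp hdouble)
  exact tendsto_nhds_unique tendsto_const_nhds (hrhs.congr fun t => (eq_of_dAlembert hC x t).symm)

end Cosine

theorem cosine_limsup_infty_zero_general {A : Type*} [NormedRing A] (C : ℝ → A)
    (hC : ∀ s t : ℝ, C (t + s) + C (t - s) = 2 * (C t * C s))
    (h : Filter.limsup (fun t : ℝ => (‖C t - 1‖₊ : ℝ≥0∞)) Filter.atTop = 0) :
    ∀ t : ℝ, C t = 1 := by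
  intro t
  rw [eq_of_dAlembert_of_tendsto_atTop hC (tendsto_of_limsup_nnnorm_sub_eq_zero h) t]
  norm_num

/-- If `C : ℝ → A` is a cosine family in a unital Banach algebra `A` and
`limsup_{t → ∞} ‖C t - 1‖ = 0`, then `C t = 1` for all `t`. -/
theorem cosine_limsup_infty_zero {A : Type*} [NormedRing A] [NormOneClass A]
    [CompleteSpace A] (C : ℝ → A)
    (hC0 : C 0 = 1)
    (hC : ∀ s t : ℝ, C (t + s) + C (t - s) = 2 * (C t * C s))
    (h : Filter.limsup (fun t : ℝ => (‖C t - 1‖₊ : ℝ≥0∞)) Filter.atTop = 0) :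
    ∀ t : ℝ, C t = 1 :=
  cosine_limsup_infty_zero_general C hC h
end

section
/- Let c : ℝ → ℂ be a scalar cosine family, i.e. c(0) = 1 and c(t+s) + c(t−s) = 2·c(t)·c(s) for all s, t ∈ ℝ. Then limsup_{t→∞} |c(t) − 1|, computed in the extended nonnegative reals, belongs to the set {0, 2, +∞}. Moreover, if limsup_{t→∞} |c(t) − 1| = 0, then c(t) = 1 for all t ∈ ℝ. -/
/-!
Writing `c s = cos w`, d'Alembert's equation is the Chebyshev recursion, so
`c (n * s) = cos (n * w)`. If `c - 1` is eventually bounded, the bound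
`sinh |Im (n * w)| ≤ ‖cos (n * w)‖` forces `w` to be real; hence `‖c t - 1‖ ≤ 2` for `t > 0`,
and the limsup is at most `2` unless it is infinite.
If eventually `‖c t - 1‖ ≤ r < 2`, take `s / B !` in place of `s`: Dirichlet's approximation
theorem gives `k ≤ B` with `k * w` within `2π / (B + 1)` of `2πℤ`, and it has to lie in `2πℤ`,
since otherwise the multiples of the small remainder pass near an odd multiple of `π`, where
`cos (n * w)` is close to `-1`. As `k ∣ B !`, this gives `c s = cos (B ! * w) = 1`.
-/

open scoped ENNReal Nat

open Filter Real Topology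

structure IsCosineFamily {G : Type*} [AddGroup G] (c : G → ℂ) : Prop where
  map_zero : c 0 = 1
  add_add_sub (s t : G) : c (t + s) + c (t - s) = 2 * (c t * c s)

theorem Complex.sinh_abs_im_le_norm_cos (z : ℂ) : Real.sinh |z.im| ≤ ‖Complex.cos z‖ := by
  have h := abs_norm_sub_norm_le (Complex.exp (-z * Complex.I)) (-Complex.exp (z * Complex.I))
  rw [sub_neg_eq_add, add_comm, ← Complex.two_cos, norm_neg, Complex.norm_exp, Complex.norm_exp,
    norm_mul, Complex.norm_two] at h
  simp only [neg_mul, Complex.neg_re, Complex.mul_I_re, neg_neg] at h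
  rw [← abs_sinh, Real.sinh_eq, abs_div, abs_two]
  linarith

theorem Complex.norm_ofReal_cos_sub_one (x : ℝ) : ‖(Real.cos x : ℂ) - 1‖ = 1 - Real.cos x := by
  rw [← Complex.ofReal_one, ← Complex.ofReal_sub, Complex.norm_real, Real.norm_eq_abs,
    abs_sub_comm, abs_of_nonneg (by linarith [cos_le_one x])]

theorem exists_nat_ge_cos_mul_le_neg_cos {ε : ℝ} (hε₀ : 0 < ε) (hεπ : ε ≤ π) (N : ℕ) :
    ∃ n ≥ N, cos (n * ε) ≤ -cos ε := by
  obtain ⟨K, hK⟩ := exists_nat_ge (N * ε / (2 * π))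
  set x := K * (2 * π) + π with hx_def
  have hNx : N * ε ≤ x := by
    rw [div_le_iff₀ (by positivity)] at hK
    linarith [pi_pos]
  set n := ⌈x / ε⌉₊
  have hxn : x ≤ n * ε := (div_le_iff₀ hε₀).1 (Nat.le_ceil _)
  have hnx : n * ε < x + ε := by
    have := mul_lt_mul_of_pos_right (Nat.ceil_lt_add_one (by positivity : 0 ≤ x / ε)) hε₀
    rwa [add_mul, div_mul_cancel₀ _ hε₀.ne', one_mul] at this
  refine ⟨n, by exact_mod_cast (le_div_iff₀ hε₀).2 hNx |>.trans (Nat.le_ceil _), ?_⟩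
  calc cos (n * ε) = -cos (n * ε - x) := by
        rw [← cos_add_pi, ← cos_add_nat_mul_two_pi (n * ε - x + π) K, hx_def]; ring_nf
    _ ≤ -cos ε := neg_le_neg (cos_le_cos_of_nonneg_of_le_pi (by linarith) hεπ (by linarith))

theorem exists_nat_mul_eq_int_mul_two_pi_of_le_cos {r : ℝ} (hr : r < 2) :
    ∃ B : ℕ, ∀ (v : ℝ) (N : ℕ), (∀ n ≥ N, 1 - r ≤ cos (n * v)) →
      ∃ k : ℕ, 0 < k ∧ k ≤ B ∧ ∃ j : ℤ, k * v = j * (2 * π) := by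
  have hlim : Tendsto (fun B : ℕ => cos (2 * π * (1 / (B + 1)))) atTop (𝓝 1) := by
    have h₀ := tendsto_one_div_add_atTop_nhds_zero_nat.const_mul (2 * π)
    rw [mul_zero] at h₀
    simpa only [cos_zero, Function.comp_def] using (continuous_cos.tendsto 0).comp h₀
  obtain ⟨B, hB₁, hBcos⟩ :=
    ((eventually_ge_atTop 1).and (hlim.eventually_const_lt (by linarith : r - 1 < 1))).exists
  have hBπ : 2 * π * (1 / (B + 1)) ≤ π := by
    have : (2 : ℝ) ≤ B + 1 := by exact_mod_cast Nat.succ_le_succ hB₁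
    rw [mul_one_div, div_le_iff₀ (by positivity)]
    nlinarith [pi_pos]
  refine ⟨B, fun v N hv => ?_⟩
  obtain ⟨k, hk₀, hkB, hk⟩ := exists_nat_abs_mul_sub_round_le (v / (2 * π)) hB₁
  set ε := k * v - round (k * (v / (2 * π))) * (2 * π)
  have hε : |ε| ≤ 2 * π * (1 / (B + 1)) := by
    have : ε = 2 * π * (k * (v / (2 * π)) - round (k * (v / (2 * π)))) := by
      simp only [ε]; field_simp
    rw [this, abs_mul, abs_of_pos (by positivity)]
    gcongr
  refine ⟨k, hk₀, hkB, round (k * (v / (2 * π))), sub_eq_zero.1 ?_⟩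
  by_contra hε₀
  obtain ⟨n, hnN, hn⟩ := exists_nat_ge_cos_mul_le_neg_cos (abs_pos.2 hε₀) (hε.trans hBπ) N
  have hcos_nk : cos ((n * k : ℕ) * v) = cos (n * |ε|) := by
    rw [← abs_of_nonneg (Nat.cast_nonneg (α := ℝ) n), ← abs_mul, cos_abs,
      ← cos_add_int_mul_two_pi (n * ε) (n * round (k * (v / (2 * π))))]
    simp only [ε]
    push_cast
    ring_nf
  have hcosε : r - 1 < cos |ε| :=
    hBcos.trans_le (cos_le_cos_of_nonneg_of_le_pi (abs_nonneg ε) hBπ hε)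
  have := hv (n * k) (hnN.trans (Nat.le_mul_of_pos_right n hk₀))
  linarith

namespace IsCosineFamily

section AddGroup

variable {G : Type*} [AddGroup G] {c : G → ℂ}

theorem map_neg (h : IsCosineFamily c) (s : G) : c (-s) = c s := by
  have := h.add_add_sub s 0
  rw [h.map_zero, zero_add, zero_sub, one_mul] at this
  linear_combination this

theorem map_nsmul (h : IsCosineFamily c) (s : G) (n : ℕ) :
    c (n • s) = (Polynomial.Chebyshev.T ℂ n).eval (c s) := by
  induction n using Nat.twoStepInduction with
  | zero => simp [h.map_zero]
  | one => simp
  | more n ih₀ ih₁ =>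
    have := h.add_add_sub s ((n + 1) • s)
    rw [← succ_nsmul, succ_nsmul s n, add_sub_cancel_right, ← succ_nsmul] at this
    push_cast at ih₁ ⊢
    rw [Polynomial.Chebyshev.T_add_two, Polynomial.eval_sub, Polynomial.eval_mul,
      Polynomial.eval_mul, Polynomial.eval_ofNat, Polynomial.eval_X, ← ih₀, ← ih₁]
    linear_combination this

end AddGroup

section Real

variable {c : ℝ → ℂ}

theorem map_mul_of_cos_eq (h : IsCosineFamily c) {s : ℝ} {w : ℂ} (hw : Complex.cos w = c s)
    (n : ℕ) : c (n * s) = Complex.cos (n * w) := by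
  rw [← nsmul_eq_mul, h.map_nsmul, ← hw, Polynomial.Chebyshev.T_complex_cos, Int.cast_natCast]

theorem exists_ofReal_cos_eq (h : IsCosineFamily c) {r : ℝ} (hbdd : ∀ᶠ t in atTop, ‖c t - 1‖ ≤ r)
    {s : ℝ} (hs : 0 < s) : ∃ v : ℝ, c s = Real.cos v := by
  obtain ⟨w, hw⟩ := Complex.cos_surjective (c s)
  suffices hw_im : w.im = 0 by
    refine ⟨w.re, ?_⟩
    rw [← hw, Complex.ofReal_cos]
    exact congrArg _ (Complex.ext (by simp) (by simp [hw_im]))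
  by_contra hw_im
  have hgrowth : Tendsto (fun n : ℕ => n * |w.im|) atTop atTop :=
    tendsto_natCast_atTop_atTop.atTop_mul_const (abs_pos.2 hw_im)
  obtain ⟨n, hn_bdd, hn_big⟩ :=
    (((tendsto_natCast_atTop_atTop.atTop_mul_const hs).eventually hbdd).and
      (hgrowth.eventually_gt_atTop (r + 1))).exists
  have hnorm : ‖c (n * s)‖ ≤ r + 1 := by
    have := norm_sub_norm_le (c (n * s)) 1
    rw [norm_one] at this
    linarith
  have hsinh : n * |w.im| ≤ ‖c (n * s)‖ := by
    have := Complex.sinh_abs_im_le_norm_cos (n * w)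
    have him : |((n : ℂ) * w).im| = n * |w.im| := by simp [abs_mul]
    rw [← h.map_mul_of_cos_eq hw, him] at this
    exact (Real.self_le_sinh_iff.2 (by positivity)).trans this
  linarith

theorem norm_sub_one_le_two (h : IsCosineFamily c) {r : ℝ} (hbdd : ∀ᶠ t in atTop, ‖c t - 1‖ ≤ r)
    {t : ℝ} (ht : 0 < t) : ‖c t - 1‖ ≤ 2 := by
  obtain ⟨v, hv⟩ := h.exists_ofReal_cos_eq hbdd ht
  rw [hv, Complex.norm_ofReal_cos_sub_one]
  linarith [neg_one_le_cos v]

theorem eq_one_of_eventually_norm_sub_one_le (h : IsCosineFamily c) {r : ℝ} (hr : r < 2)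
    (hbdd : ∀ᶠ t in atTop, ‖c t - 1‖ ≤ r) (s : ℝ) : c s = 1 := by
  suffices hpos : ∀ s > 0, c s = 1 by
    rcases lt_trichotomy s 0 with hs | rfl | hs
    · rw [← h.map_neg]; exact hpos _ (neg_pos.2 hs)
    · exact h.map_zero
    · exact hpos s hs
  intro s hs
  obtain ⟨B, hB⟩ := exists_nat_mul_eq_int_mul_two_pi_of_le_cos hr
  have hs' : 0 < s / B ! := by positivity
  obtain ⟨v, hv⟩ := h.exists_ofReal_cos_eq hbdd hs'
  have horbit (n : ℕ) : c (n * (s / B !)) = Real.cos (n * v) := by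
    rw [h.map_mul_of_cos_eq (hv.trans (Complex.ofReal_cos v)).symm]
    push_cast; rfl
  obtain ⟨N, hN⟩ := eventually_atTop.1
    ((tendsto_natCast_atTop_atTop.atTop_mul_const hs').eventually hbdd)
  obtain ⟨k, hk₀, hkB, j, hkj⟩ := hB v N fun n hn => by
    have := hN n hn
    rw [horbit, Complex.norm_ofReal_cos_sub_one] at this
    linarith
  obtain ⟨m, hm⟩ := Nat.dvd_factorial hk₀ hkB
  calc c s = c ((B ! : ℕ) * (s / B !)) := by rw [mul_div_cancel₀ _ (by positivity)]
    _ = Real.cos ((m * j : ℤ) * (2 * π)) := by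
      rw [horbit, hm, Nat.cast_mul, mul_comm (k : ℝ), mul_assoc, hkj]
      push_cast; ring_nf
    _ = 1 := by rw [cos_int_mul_two_pi, Complex.ofReal_one]

end Real

end IsCosineFamily

theorem exists_eventually_norm_le_of_limsup_nnnorm_lt {α E : Type*} [SeminormedAddGroup E]
    {l : Filter α} {f : α → E} {b : ℝ≥0∞} (h : limsup (fun x => (‖f x‖₊ : ℝ≥0∞)) l < b) :
    ∃ r : ℝ, ENNReal.ofReal r < b ∧ ∀ᶠ x in l, ‖f x‖ ≤ r := by
  obtain ⟨r, -, hlr, hrb⟩ := ENNReal.lt_iff_exists_real_btwn.1 h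
  refine ⟨r, hrb, (eventually_lt_of_limsup_lt hlr).mono fun x hx => ?_⟩
  exact (by simpa only [ENNReal.coe_lt_ofReal, coe_nnnorm] using hx : ‖f x‖ < r).le

/-- For a scalar cosine family `c : ℝ → ℂ`, the limit superior
`limsup_{t → ∞} |c t - 1|` (in `ℝ≥0∞`) is `0`, `2`, or `∞`; moreover if it
is `0` then `c ≡ 1`. -/
theorem scalar_cosine_limsup_infty_trichotomy (c : ℝ → ℂ)
    (hc0 : c 0 = 1)
    (hc : ∀ s t : ℝ, c (t + s) + c (t - s) = 2 * (c t * c s)) :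
    (Filter.limsup (fun t : ℝ => (‖c t - 1‖₊ : ℝ≥0∞)) Filter.atTop = 0 ∨
      Filter.limsup (fun t : ℝ => (‖c t - 1‖₊ : ℝ≥0∞)) Filter.atTop = 2 ∨
      Filter.limsup (fun t : ℝ => (‖c t - 1‖₊ : ℝ≥0∞)) Filter.atTop = ⊤) ∧
    (Filter.limsup (fun t : ℝ => (‖c t - 1‖₊ : ℝ≥0∞)) Filter.atTop = 0 →
      ∀ t : ℝ, c t = 1) := by
  have hcf : IsCosineFamily c := ⟨hc0, hc⟩
  set L := limsup (fun t : ℝ => (‖c t - 1‖₊ : ℝ≥0∞)) atTop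
  have h_one : L < 2 → ∀ t, c t = 1 := fun hL => by
    obtain ⟨r, hr, hbdd⟩ := exists_eventually_norm_le_of_limsup_nnnorm_lt hL
    exact hcf.eq_one_of_eventually_norm_sub_one_le
      (by simpa only [ENNReal.ofReal_lt_ofNat] using hr) hbdd
  refine ⟨?_, fun hL => h_one (hL ▸ two_pos)⟩
  rcases lt_or_ge L 2 with hL2 | hL2
  · left
    simp [L, h_one hL2]
  rcases (le_top : L ≤ ⊤).lt_or_eq with hLtop | hLtop
  · right; left
    obtain ⟨r, -, hbdd⟩ := exists_eventually_norm_le_of_limsup_nnnorm_lt hLtop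
    refine le_antisymm (limsup_le_of_le (h := ?_)) hL2
    filter_upwards [eventually_gt_atTop 0] with t ht
    exact_mod_cast (show ‖c t - 1‖₊ ≤ 2 by
      rw [← NNReal.coe_le_coe]; simpa using hcf.norm_sub_one_le_two hbdd ht)
  · right; right
    exact hLtop
end

section
/- Let A be a unital complex Banach algebra and let C : ℝ → A be a cosine family, i.e. C(0) = 1 and C(t+s) + C(t−s) = 2·C(t)·C(s) for all s, t ∈ ℝ. If limsup_{t→∞} ρ(C(t) − 1) < 2, where ρ denotes the spectral radius in A, then ρ(C(t) − 1) = 0 for all t ∈ ℝ. -/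
/-!
By the Chebyshev identity `C (n * u) = T_n (C u)` and the spectral mapping theorem for
polynomials, everything reduces to scalars. For `λ ∈ σ (C u)` write `λ = cos w`; then
`T_n λ = cos (n w)` stays within some `L < 2` of `1` for all large `n`, which forces `w` to be real and
keeps the angles `n w` away from `π`. Dirichlet's approximation theorem then makes `w` a torsion
point of `ℝ / 2πℤ` of order at most some `B` depending only on `L`, so `T_{B!} λ = 1`. Applying
this with `u = t / B!` gives `σ (C t) ⊆ {1}`.
-/

open Filter Topology Polynomial Polynomial.Chebyshev
open scoped ENNReal NNReal

theorem exists_nat_abs_mul_sub_le {r : ℝ} (hr : r ≠ 0) {p : ℝ} (hp : 0 < p) (s : ℝ) (N : ℕ) :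
    ∃ k ≥ N, ∃ m : ℤ, |k * r - (s + m * p)| ≤ |r| / 2 := by
  wlog hr₀ : 0 < r generalizing r s
  · obtain ⟨k, hk, m, hkm⟩ :=
      this (neg_ne_zero.2 hr) (-s) (neg_pos.2 (lt_of_le_of_ne (not_lt.1 hr₀) hr))
    refine ⟨k, hk, -m, ?_⟩
    rw [abs_neg] at hkm
    rw [← abs_neg]
    convert hkm using 2
    push_cast
    ring
  obtain ⟨m, hm⟩ := exists_int_ge (((N + 1) * r - s) / p)
  set t := s + m * p
  have ht : (N + 1) * r ≤ t := by
    have := (div_le_iff₀ hp).1 hm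
    simp only [t]; linarith
  have hround : |t / r - round (t / r)| ≤ 1 / 2 := abs_sub_round _
  have hk : (N : ℝ) < round (t / r) := by
    have := (le_div_iff₀ hr₀).2 ht
    have := (abs_le.1 hround).2
    linarith
  have hk₀ : (0 : ℤ) ≤ round (t / r) := by exact_mod_cast (N.cast_nonneg.trans hk.le)
  refine ⟨(round (t / r)).toNat, ?_, m, ?_⟩
  · have : (N : ℤ) < round (t / r) := by exact_mod_cast hk
    omega
  · have hkr : (((round (t / r)).toNat : ℕ) : ℝ) = round (t / r) := by
      exact_mod_cast Int.toNat_of_nonneg hk₀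
    rw [hkr, abs_of_pos hr₀, show (round (t / r) : ℝ) * r - t = -((t / r - round (t / r)) * r) by
      field_simp; ring, abs_neg, abs_mul, abs_of_pos hr₀]
    linarith [mul_le_mul_of_nonneg_right hround hr₀.le]

namespace AddCircle

variable {p : ℝ} [hp : Fact (0 < p)]

theorem frequently_norm_nsmul_sub_le {y : AddCircle p} (hy : y ≠ 0) (a : AddCircle p) :
    ∃ᶠ k : ℕ in atTop, ‖k • y - a‖ ≤ ‖y‖ / 2 := by
  induction y using QuotientAddGroup.induction_on with | H r₀ => ?_
  induction a using QuotientAddGroup.induction_on with | H s => ?_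
  -- the representative of `y` in `[-p/2, p/2]`, so that `‖y‖ = |r|`
  set r := r₀ - round (p⁻¹ * r₀) * p
  have hyr : (r₀ : AddCircle p) = r := by simp [r, coe_period]
  rw [norm_eq, hyr, frequently_atTop]
  rw [hyr] at hy
  intro N
  have hr : r ≠ 0 := by rintro h; simp [h] at hy
  obtain ⟨k, hk, m, hkm⟩ := exists_nat_abs_mul_sub_le hr hp.out s N
  refine ⟨k, hk, le_trans ?_ hkm⟩
  have : k • (r : AddCircle p) - s = ((k * r - (s + m * p) : ℝ) : AddCircle p) := by simp
  rw [this]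
  exact QuotientAddGroup.norm_mk_le_norm

theorem exists_nsmul_eq_zero_of_eventually_nsmul_notMem {a : AddCircle p}
    {U : Set (AddCircle p)} (hU : U ∈ 𝓝 a) :
    ∃ M : ℕ, 0 < M ∧ ∀ x : AddCircle p, (∀ᶠ n : ℕ in atTop, n • x ∉ U) → M • x = 0 := by
  obtain ⟨δ, hδ, hball⟩ := Metric.mem_nhds_iff.1 hU
  obtain ⟨B, hB⟩ := exists_nat_gt (p / (2 * δ))
  have hB₀ : 0 < B := by
    have : 0 < p / (2 * δ) := by have := hp.out; positivity
    exact_mod_cast this.trans hB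
  have hpB : p / (B + 1 : ℕ) < 2 * δ := by
    rw [div_lt_iff₀ (by positivity)]
    rw [div_lt_iff₀ (by positivity)] at hB
    push_cast
    nlinarith
  refine ⟨B.factorial, B.factorial_pos, fun x hx => ?_⟩
  obtain ⟨j, ⟨hj₁, hjB⟩, hj⟩ := exists_norm_nsmul_le x hB₀
  suffices hjx : j • x = 0 by
    obtain ⟨c, hc⟩ := Nat.dvd_factorial hj₁ hjB
    rw [hc, mul_nsmul, hjx, nsmul_zero]
  -- Otherwise the multiples of `j • x`, a nonzero point within `2 * δ` of `0`, enter `ball a δ`.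
  by_contra hjx
  have hmul : Tendsto (fun k : ℕ => k * j) atTop atTop :=
    tendsto_id.atTop_mul_const' hj₁
  obtain ⟨k, hk, hkU⟩ :=
    ((frequently_norm_nsmul_sub_le hjx a).and_eventually (hmul.eventually hx)).exists
  refine hkU (hball ?_)
  rw [Metric.mem_ball, dist_eq_norm, mul_nsmul']
  linarith

end AddCircle

namespace Complex

theorem abs_sinh_im_le_norm_cos (z : ℂ) : |Real.sinh z.im| ≤ ‖cos z‖ := by
  have h := abs_norm_sub_norm_le (exp (-z * I)) (-exp (z * I))
  rw [norm_neg, sub_neg_eq_add, norm_exp, norm_exp, add_comm, ← two_cos, norm_mul,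
    Complex.norm_two] at h
  have hre₁ : (-z * I).re = z.im := by simp
  have hre₂ : (z * I).re = -z.im := by simp
  rw [hre₁, hre₂] at h
  rw [Real.sinh_eq, abs_div, abs_two]
  linarith

theorem im_eq_zero_of_eventually_norm_cos_nat_mul_le {w : ℂ} {K : ℝ}
    (h : ∀ᶠ n : ℕ in atTop, ‖cos (n * w)‖ ≤ K) : w.im = 0 := by
  by_contra hw
  have hlin : Tendsto (fun n : ℕ => n * |w.im|) atTop atTop :=
    tendsto_natCast_atTop_atTop.atTop_mul_const (abs_pos.2 hw)
  obtain ⟨n, hnK, hn⟩ := (h.and (hlin.eventually_gt_atTop K)).exists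
  have hsinh : n * |w.im| ≤ |Real.sinh (n * w).im| := by
    have him : (n * w).im = n * w.im := by simp
    rw [Real.abs_sinh, him, abs_mul, Nat.abs_cast]
    exact Real.self_le_sinh_iff.2 (by positivity)
  linarith [abs_sinh_im_le_norm_cos (n * w)]

end Complex

theorem exists_eval_chebyshev_T_eq_one {L : ℝ} (hL : L < 2) :
    ∃ M : ℕ, 0 < M ∧ ∀ μ : ℂ, (∀ᶠ n : ℕ in atTop, ‖(T ℂ n).eval μ - 1‖ ≤ L) →
      (T ℂ M).eval μ = 1 := by
  have : Fact (0 < 2 * Real.pi) := ⟨Real.two_pi_pos⟩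
  set U : Set Real.Angle := {w | w.cos < 1 - L}
  have hU : U ∈ 𝓝 (Real.pi : Real.Angle) := by
    refine (isOpen_lt Real.Angle.continuous_cos continuous_const).mem_nhds ?_
    show Real.Angle.cos Real.pi < 1 - L
    linarith [Real.Angle.cos_coe_pi]
  obtain ⟨M, hM₀, hM⟩ := AddCircle.exists_nsmul_eq_zero_of_eventually_nsmul_notMem hU
  refine ⟨M, hM₀, fun μ hμ => ?_⟩
  obtain ⟨w, rfl⟩ := Complex.cos_surjective μ
  have hT (n : ℕ) : (T ℂ n).eval (Complex.cos w) = Complex.cos (n * w) := by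
    exact_mod_cast T_complex_cos w n
  have him : w.im = 0 := Complex.im_eq_zero_of_eventually_norm_cos_nat_mul_le (K := L + 1) <|
    hμ.mono fun n hn => by
      rw [hT] at hn
      linarith [norm_le_norm_sub_add (Complex.cos (n * w)) 1, norm_one (α := ℂ)]
  obtain ⟨θ, rfl⟩ : ∃ θ : ℝ, (θ : ℂ) = w := ⟨w.re, Complex.ext (by simp) (by simp [him])⟩
  have hcos (n : ℕ) : Complex.cos (n * θ) = (n • (θ : Real.Angle)).cos := by
    rw [← Real.Angle.coe_nsmul, Real.Angle.cos_coe, nsmul_eq_mul]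
    push_cast
    rfl
  have hMθ : M • (θ : Real.Angle) = 0 := hM _ <| hμ.mono fun n hn => by
    rw [hT, hcos, ← Complex.ofReal_one, ← Complex.ofReal_sub, Complex.norm_real,
      Real.norm_eq_abs] at hn
    show ¬ (n • (θ : Real.Angle)).cos < 1 - L
    linarith [neg_abs_le ((n • (θ : Real.Angle)).cos - 1)]
  rw [hT, hcos, hMθ, Real.Angle.cos_zero, Complex.ofReal_one]

structure IsCosineFamily_s4 {A : Type*} [Ring A] (C : ℝ → A) : Prop where
  apply_zero : C 0 = 1
  add_add_sub (s t : ℝ) : C (t + s) + C (t - s) = 2 * (C t * C s)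

namespace IsCosineFamily_s4

variable {A : Type*} [Ring A] {C : ℝ → A}

theorem apply_neg (hC : IsCosineFamily_s4 C) (t : ℝ) : C (-t) = C t := by
  have h := hC.add_add_sub t 0
  rw [zero_add, zero_sub, hC.apply_zero, one_mul, two_mul] at h
  exact add_left_cancel h

theorem apply_abs (hC : IsCosineFamily_s4 C) (t : ℝ) : C |t| = C t := by
  rcases abs_choice t with h | h <;> rw [h]
  exact hC.apply_neg t

theorem aeval_chebyshev_T {R : Type*} [CommRing R] [Algebra R A] (hC : IsCosineFamily_s4 C)
    (u : ℝ) (n : ℕ) : aeval (C u) (T R n) = C (n * u) := by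
  induction n using Nat.twoStepInduction with
  | zero => simp [hC.apply_zero]
  | one => simp
  | more n ih₀ ih₁ =>
    have hrec : T R ((n + 2 : ℕ) : ℤ) = 2 * (T R ((n + 1 : ℕ) : ℤ) * X) - T R n := by
      push_cast
      rw [T_add_two]
      ring
    have h := hC.add_add_sub u ((n + 1 : ℕ) * u)
    rw [show ((n + 1 : ℕ) : ℝ) * u + u = (n + 2 : ℕ) * u by push_cast; ring,
      show ((n + 1 : ℕ) : ℝ) * u - u = n * u by push_cast; ring] at h
    rw [hrec, map_sub, map_mul, map_mul, aeval_X, map_ofNat, ih₀, ih₁, ← h, add_sub_cancel_right]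

theorem nnnorm_eval_chebyshev_T_sub_one_le {𝕜 : Type*} [NormedField 𝕜] [Algebra 𝕜 A]
    (hC : IsCosineFamily_s4 C) {u : ℝ} {k : 𝕜} (hk : k ∈ spectrum 𝕜 (C u)) (n : ℕ) :
    (‖(T 𝕜 n).eval k - 1‖₊ : ℝ≥0∞) ≤ spectralRadius 𝕜 (C (n * u) - 1) := by
  have hmem : (T 𝕜 n - 1).eval k ∈ spectrum 𝕜 (C (n * u) - 1) := by
    rw [← hC.aeval_chebyshev_T (R := 𝕜) u n, ← map_one (aeval (R := 𝕜) (C u)), ← map_sub]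
    exact spectrum.subset_polynomial_aeval _ _ ⟨k, hk, rfl⟩
  rw [eval_sub, eval_one] at hmem
  exact le_iSup₂ (f := fun x (_ : x ∈ spectrum 𝕜 (C (n * u) - 1)) => (‖x‖₊ : ℝ≥0∞)) _ hmem

theorem spectralRadius_sub_one_eq_zero [Algebra ℂ A] (hC : IsCosineFamily_s4 C) {r : ℝ≥0}
    (hr : r < 2) (hbound : ∀ᶠ t in atTop, spectralRadius ℂ (C t - 1) < r) (t : ℝ) :
    spectralRadius ℂ (C t - 1) = 0 := by
  obtain ⟨M, hM₀, hM⟩ := exists_eval_chebyshev_T_eq_one (L := r) (by exact_mod_cast hr)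
  rw [← hC.apply_abs]
  rcases (abs_nonneg t).eq_or_lt with ht | ht
  · rw [← ht, hC.apply_zero, sub_self, spectrum.spectralRadius_zero]
  set u := |t| / M
  have hu : 0 < u := by positivity
  have hspec (k : ℂ) (hk : k ∈ spectrum ℂ (C u)) : (T ℂ M - 1).eval k = 0 := by
    rw [eval_sub, eval_one, sub_eq_zero]
    refine hM k ?_
    have hnu : Tendsto (fun n : ℕ => n * u) atTop atTop :=
      tendsto_natCast_atTop_atTop.atTop_mul_const hu
    filter_upwards [hnu.eventually hbound] with n hn
    have := (hC.nnnorm_eval_chebyshev_T_sub_one_le hk n).trans_lt hn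
    exact_mod_cast this.le
  have hdeg : 0 < (T ℂ M - 1).degree := by
    rw [degree_sub_eq_left_of_degree_lt] <;> simp [degree_T, hM₀]
  have hCt : C |t| - 1 = aeval (C u) (T ℂ M - 1) := by
    rw [map_sub, map_one, hC.aeval_chebyshev_T, mul_div_cancel₀ _ (by positivity)]
  rw [hCt, spectralRadius, spectrum.map_polynomial_aeval_of_degree_pos _ _ hdeg]
  refine le_antisymm (iSup₂_le ?_) bot_le
  rintro _ ⟨k, hk, rfl⟩
  simp [hspec k hk]

end IsCosineFamily_s4

theorem cosine_limsup_spectralRadius_general {A : Type*} [NormedRing A] [NormedAlgebra ℂ A]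
    (C : ℝ → A)
    (hC0 : C 0 = 1)
    (hC : ∀ s t : ℝ, C (t + s) + C (t - s) = 2 * (C t * C s))
    (h : Filter.limsup (fun t : ℝ => spectralRadius ℂ (C t - 1)) Filter.atTop < 2) :
    ∀ t : ℝ, spectralRadius ℂ (C t - 1) = 0 := by
  obtain ⟨r, hlim, hr⟩ := ENNReal.lt_iff_exists_nnreal_btwn.1 h
  exact IsCosineFamily_s4.spectralRadius_sub_one_eq_zero ⟨hC0, hC⟩ (mod_cast hr)
    (eventually_lt_of_limsup_lt hlim)

/-- If `C : ℝ → A` is a cosine family in a unital complex Banach algebra `A`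
and `limsup_{t → ∞} ρ(C t - 1) < 2` for the spectral radius `ρ`, then
`ρ(C t - 1) = 0` for all `t`. -/
theorem cosine_limsup_spectralRadius {A : Type*} [NormedRing A] [NormedAlgebra ℂ A]
    [NormOneClass A] [CompleteSpace A] (C : ℝ → A)
    (hC0 : C 0 = 1)
    (hC : ∀ s t : ℝ, C (t + s) + C (t - s) = 2 * (C t * C s))
    (h : Filter.limsup (fun t : ℝ => spectralRadius ℂ (C t - 1)) Filter.atTop < 2) :
    ∀ t : ℝ, spectralRadius ℂ (C t - 1) = 0 :=
  cosine_limsup_spectralRadius_general C hC0 hC h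
end

section
/- Let A be a unital complex Banach algebra and let C : ℝ → A be a cosine family, i.e. C(0) = 1 and C(t+s) + C(t−s) = 2·C(t)·C(s) for all s, t ∈ ℝ. Suppose that for some s ∈ ℝ one has ‖C(2s) − 1‖ ≤ 2 and ρ(C(s) − 1) < 1, where ρ is the spectral radius. Then C(s) = √(1 − (1 − C(2s))/2), where for x ∈ A with ‖x‖ ≤ 1 the square root is defined by the binomial series √(1−x) := ∑_{n=0}^∞ binom(1/2, n)·(−1)^n·x^n with binom(1/2, n) = (1/2)(1/2 − 1)⋯(1/2 − n + 1)/n!. -/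
/-!
With `a = C(s)`, d'Alembert's equation at `t = s` gives `C(2s) = 2a² - 1`, so the argument
`x = (1 - C(2s))/2` of the square root is `1 - a²`, of norm at most `1`.

For `0 ≤ r ≤ 1` the terms `(-1)ⁿ binom(r, n)`, `n ≥ 1`, are all `≤ 0` and their partial sums equal
`(-1)ᴺ binom(r - 1, N) - 1 ≥ -1`. Hence the binomial series of `(1 - x)^r` converges absolutely for
`‖x‖ ≤ 1`, its sum lies within `1` of `1`, and Chu–Vandermonde gives `y² = 1 - x = a²` for
`y = √(1 - x)`. Being a limit of polynomials in `x`, `y` commutes with `a`, so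
`(a - y)(a + y) = 0`, and it remains to invert `a + y = (2 + (y - 1)) + (a - 1)`. Here
`B = 2 + (y - 1)` is a unit with `‖B⁻¹‖ ≤ 1` commuting with `a - 1`, and Gelfand's formula gives
`ρ(B⁻¹(a - 1)) ≤ ‖B⁻¹‖ ρ(a - 1) < 1`, so `a + y = B(1 + B⁻¹(a - 1))` is a unit.
-/

open scoped Nat ENNReal

/-- The generalized binomial coefficient `binom (1/2) n`, i.e. the `n`-th Taylor
coefficient of `z ↦ √(1-z)` at `0` up to the sign `(-1)^n`. -/
noncomputable def binomHalf (n : ℕ) : ℝ :=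
  (∏ i ∈ Finset.range n, ((1 : ℝ) / 2 - i)) / n !

/-- The square root `√(1-x)` defined by the binomial series, for `x` in a
unital complex Banach algebra with `‖x‖ ≤ 1`. -/
noncomputable def sqrtOneSub {A : Type*} [NormedRing A] [NormedAlgebra ℂ A]
    [CompleteSpace A] (x : A) : A :=
  ∑' n : ℕ, (((binomHalf n * (-1) ^ n : ℝ) : ℂ)) • x ^ n

open Finset

namespace Ring

theorem choose_eq_prod_range_div {𝕜 : Type*} [Field 𝕜] [CharZero 𝕜] (r : 𝕜) (n : ℕ) :
    choose r n = (∏ i ∈ range n, (r - i)) / n ! := by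
  rw [choose_eq_smul, ← Polynomial.aeval_eq_smeval, Polynomial.aeval_def,
    Polynomial.eval₂_eq_eval_map, descPochhammer_map, descPochhammer_eval_eq_prod_range,
    smul_eq_mul, div_eq_inv_mul]

theorem sum_range_neg_one_pow_mul_choose {R : Type*} [CommRing R] [BinomialRing R] (r : R)
    (N : ℕ) : ∑ k ∈ range (N + 1), (-1) ^ k * choose r k = (-1) ^ N * choose (r - 1) N := by
  induction N with
  | zero => simp
  | succ N ih =>
    have pascal := choose_succ_succ (r - 1) N
    rw [sub_add_cancel] at pascal
    rw [sum_range_succ, ih, pascal]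
    ring

theorem neg_one_pow_mul_choose_nonneg {s : ℝ} (hs : s ≤ 0) (n : ℕ) :
    0 ≤ (-1) ^ n * choose s n := by
  have hprod : (-1) ^ n * ∏ i ∈ range n, (s - i) = ∏ i ∈ range n, ((i : ℝ) - s) := by
    rw [show ((-1 : ℝ)) ^ n = (-1) ^ #(range n) by simp, ← prod_neg]
    simp only [neg_sub]
  rw [choose_eq_prod_range_div, mul_div_assoc', hprod]
  exact div_nonneg (prod_nonneg fun i _ => by linarith [(Nat.cast_nonneg i : (0:ℝ) ≤ i)])
    (Nat.cast_nonneg _)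

theorem neg_one_pow_mul_choose_succ_nonneg {r : ℝ} (h0 : 0 ≤ r) (h1 : r ≤ 1) (n : ℕ) :
    0 ≤ (-1) ^ n * choose r (n + 1) := by
  have h := choose_smul_choose r (Nat.le_add_left 1 n)
  simp only [Nat.choose_one_right, nsmul_eq_mul, choose_one_right, Nat.cast_one,
    Nat.add_sub_cancel] at h
  have hn : (0 : ℝ) < ↑(n + 1) := Nat.cast_pos.mpr n.succ_pos
  have hrec : (-1) ^ n * choose r (n + 1) = r / ↑(n + 1) * ((-1) ^ n * choose (r - 1) n) := by
    field_simp
    rw [← h]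
    ring
  rw [hrec]
  exact mul_nonneg (div_nonneg h0 hn.le) (neg_one_pow_mul_choose_nonneg (by linarith) n)

theorem sum_range_abs_choose_succ_le_one {r : ℝ} (h0 : 0 ≤ r) (h1 : r ≤ 1) (N : ℕ) :
    ∑ k ∈ range N, |choose r (k + 1)| ≤ 1 := by
  have hsum := sum_range_neg_one_pow_mul_choose r N
  rw [sum_range_succ'] at hsum
  have habs : ∀ k, |choose r (k + 1)| = (-1) ^ k * choose r (k + 1) := fun k => by
    rw [← abs_of_nonneg (neg_one_pow_mul_choose_succ_nonneg h0 h1 k), abs_mul, abs_neg_one_pow,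
      one_mul]
  simp only [pow_succ, mul_neg_one, neg_mul, ← habs, sum_neg_distrib, pow_zero,
    choose_zero_right, mul_one] at hsum
  linarith [neg_one_pow_mul_choose_nonneg (by linarith : r - 1 ≤ 0) N]

theorem summable_abs_choose {r : ℝ} (h0 : 0 ≤ r) (h1 : r ≤ 1) :
    Summable fun n => |choose r n| :=
  (summable_nat_add_iff 1).mp <|
    summable_of_sum_range_le (fun _ => abs_nonneg _) (sum_range_abs_choose_succ_le_one h0 h1)

end Ring

section BinomialSeries

variable {𝕂 A : Type*} [NormedField 𝕂] [CharZero 𝕂] [NormedRing A] [NormedAlgebra 𝕂 A]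

theorem binomialSeries_sum_eq_tsum (a : 𝕂) (x : A) :
    (binomialSeries A a).sum x = ∑' n, Ring.choose a n • x ^ n := by
  simp [FormalMultilinearSeries.sum]

theorem binomialSeries_sum_mul [CompleteSpace A] {a b : 𝕂} {x : A}
    (ha : Summable fun n => ‖Ring.choose a n • x ^ n‖)
    (hb : Summable fun n => ‖Ring.choose b n • x ^ n‖) :
    (binomialSeries A a).sum x * (binomialSeries A b).sum x = (binomialSeries A (a + b)).sum x := by
  simp only [binomialSeries_sum_eq_tsum]
  rw [tsum_mul_tsum_eq_tsum_sum_antidiagonal_of_summable_norm ha hb]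
  refine tsum_congr fun n => ?_
  rw [Ring.add_choose_eq n (Commute.all a b), sum_smul]
  refine sum_congr rfl fun ij hij => ?_
  rw [smul_mul_smul_comm, ← pow_add, mem_antidiagonal.mp hij]

theorem binomialSeries_sum_one (x : A) : (binomialSeries A (1 : 𝕂)).sum x = 1 + x := by
  rw [binomialSeries_sum_eq_tsum, tsum_eq_sum (s := range 2)]
  · simp [sum_range_succ]
  · intro n hn
    rw [← Nat.cast_one, Ring.choose_natCast, Nat.choose_eq_zero_of_lt (by simpa using hn)]
    simp

end BinomialSeries

section BinomialSeriesOfReal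

variable {𝕂 A : Type*} [RCLike 𝕂] [NormedRing A] [NormedAlgebra 𝕂 A] [NormOneClass A]

theorem norm_choose_ofReal_smul_pow_le (r : ℝ) {x : A} (hx : ‖x‖ ≤ 1) (n : ℕ) :
    ‖Ring.choose (r : 𝕂) n • x ^ n‖ ≤ |Ring.choose r n| := by
  rw [norm_smul, ← RCLike.algebraMap_eq_ofReal, ← Ring.map_choose, RCLike.algebraMap_eq_ofReal,
    RCLike.norm_ofReal]
  exact mul_le_of_le_one_right (abs_nonneg _)
    ((norm_pow_le x n).trans (pow_le_one₀ (norm_nonneg x) hx))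

theorem summable_norm_choose_ofReal_smul_pow {r : ℝ} (h0 : 0 ≤ r) (h1 : r ≤ 1) {x : A}
    (hx : ‖x‖ ≤ 1) : Summable fun n => ‖Ring.choose (r : 𝕂) n • x ^ n‖ :=
  (Ring.summable_abs_choose h0 h1).of_nonneg_of_le (fun _ => norm_nonneg _)
    (norm_choose_ofReal_smul_pow_le r hx)

theorem norm_binomialSeries_sum_sub_one_le [CompleteSpace A] {r : ℝ} (h0 : 0 ≤ r) (h1 : r ≤ 1)
    {x : A} (hx : ‖x‖ ≤ 1) : ‖(binomialSeries A (r : 𝕂)).sum x - 1‖ ≤ 1 := by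
  have hs := summable_norm_choose_ofReal_smul_pow (𝕂 := 𝕂) h0 h1 hx
  have hs₁ := (summable_nat_add_iff 1).mpr hs
  rw [binomialSeries_sum_eq_tsum, hs.of_norm.tsum_eq_zero_add]
  simp only [Ring.choose_zero_right, pow_zero, one_smul, add_sub_cancel_left]
  calc ‖∑' n, Ring.choose (r : 𝕂) (n + 1) • x ^ (n + 1)‖
      ≤ ∑' n, ‖Ring.choose (r : 𝕂) (n + 1) • x ^ (n + 1)‖ := norm_tsum_le_tsum_norm hs₁
    _ ≤ ∑' n, |Ring.choose r (n + 1)| :=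
        hs₁.tsum_le_tsum (fun n => norm_choose_ofReal_smul_pow_le r hx (n + 1))
          ((summable_nat_add_iff 1).mpr (Ring.summable_abs_choose h0 h1))
    _ ≤ 1 := Real.tsum_le_of_sum_range_le (fun _ => abs_nonneg _)
        (Ring.sum_range_abs_choose_succ_le_one h0 h1)

end BinomialSeriesOfReal

theorem binomHalf_eq_choose (n : ℕ) : binomHalf n = Ring.choose (1 / 2 : ℝ) n := by
  rw [binomHalf, Ring.choose_eq_prod_range_div]

section SqrtOneSub

variable {A : Type*} [NormedRing A] [NormedAlgebra ℂ A] [CompleteSpace A]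

theorem sqrtOneSub_eq_binomialSeries_sum (x : A) :
    sqrtOneSub x = (binomialSeries A ((1 / 2 : ℝ) : ℂ)).sum (-x) := by
  rw [sqrtOneSub, binomialSeries_sum_eq_tsum]
  refine tsum_congr fun n => ?_
  rw [binomHalf_eq_choose, Complex.ofReal_mul, Complex.ofReal_choose, mul_smul, ← neg_one_smul ℂ x,
    smul_pow]
  push_cast
  rfl

theorem Commute.sqrtOneSub_right {a x : A} (h : Commute a x) : Commute a (sqrtOneSub x) :=
  Commute.tsum_right a fun n => (h.pow_right n).smul_right _

variable [NormOneClass A]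

theorem sqrtOneSub_mul_self {x : A} (hx : ‖x‖ ≤ 1) : sqrtOneSub x * sqrtOneSub x = 1 - x := by
  have hs : Summable fun n => ‖Ring.choose ((1 / 2 : ℝ) : ℂ) n • (-x) ^ n‖ :=
    summable_norm_choose_ofReal_smul_pow (r := 1 / 2) (by norm_num) (by norm_num)
      ((norm_neg x).trans_le hx)
  rw [sqrtOneSub_eq_binomialSeries_sum, binomialSeries_sum_mul hs hs, ← Complex.ofReal_add,
    add_halves, Complex.ofReal_one, binomialSeries_sum_one, sub_eq_add_neg]

theorem norm_sqrtOneSub_sub_one_le {x : A} (hx : ‖x‖ ≤ 1) : ‖sqrtOneSub x - 1‖ ≤ 1 := by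
  rw [sqrtOneSub_eq_binomialSeries_sum]
  exact norm_binomialSeries_sum_sub_one_le (r := 1 / 2) (by norm_num) (by norm_num)
    ((norm_neg x).trans_le hx)

end SqrtOneSub

section Spectral

variable {A : Type*} [NormedRing A] [NormedAlgebra ℂ A] [CompleteSpace A]

theorem spectralRadius_mul_le_of_commute {b u : A} (h : Commute b u) :
    spectralRadius ℂ (b * u) ≤ ‖b‖₊ * spectralRadius ℂ u := by
  refine le_of_tendsto_of_tendsto
    (spectrum.pow_nnnorm_pow_one_div_tendsto_nhds_spectralRadius (b * u))
    (ENNReal.Tendsto.const_mul (spectrum.pow_nnnorm_pow_one_div_tendsto_nhds_spectralRadius u)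
      (Or.inr ENNReal.coe_ne_top)) ?_
  filter_upwards [Filter.eventually_ne_atTop 0] with n hn
  have hnorm : (‖(b * u) ^ n‖₊ : ℝ≥0∞) ≤ (‖b‖₊ : ℝ≥0∞) ^ n * ‖u ^ n‖₊ := by
    rw [h.mul_pow]
    exact_mod_cast (nnnorm_mul_le _ _).trans
      (mul_le_mul_left (nnnorm_pow_le' b (Nat.pos_of_ne_zero hn)) _)
  calc (‖(b * u) ^ n‖₊ : ℝ≥0∞) ^ (1 / n : ℝ)
      ≤ ((‖b‖₊ : ℝ≥0∞) ^ n * ‖u ^ n‖₊) ^ (1 / n : ℝ) := by gcongr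
    _ = ‖b‖₊ * (‖u ^ n‖₊ : ℝ≥0∞) ^ (1 / n : ℝ) := by
      rw [ENNReal.mul_rpow_of_nonneg _ _ (by positivity), ← ENNReal.rpow_natCast,
        ← ENNReal.rpow_mul, mul_one_div_cancel (Nat.cast_ne_zero.mpr hn), ENNReal.rpow_one]

theorem isUnit_two_add_add_of_commute [NormOneClass A] {u v : A} (huv : Commute u v)
    (hu : spectralRadius ℂ u < 1) (hv : ‖v‖ ≤ 1) : IsUnit (2 + v + u) := by
  set w : A := -((2 : ℂ)⁻¹ • v)
  have hw : ‖w‖ ≤ 1 / 2 := by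
    rw [norm_neg, norm_smul, norm_inv, Complex.norm_two]
    linarith
  set U := Units.oneSub w (by linarith)
  have hU : (U : A) * 2 = 2 + v := by
    rw [Units.val_oneSub, sub_mul, one_mul, neg_mul, sub_neg_eq_add, smul_mul_assoc, mul_two,
      ← two_smul ℂ v, smul_smul, inv_mul_cancel₀ two_ne_zero, one_smul]
  have hUinv : ‖(↑U⁻¹ : A)‖₊ ≤ 2 := by
    have hgeom := tsum_geometric_le_of_norm_lt_one w (by linarith)
    rw [norm_one, sub_self, zero_add] at hgeom
    have : ‖(↑U⁻¹ : A)‖ ≤ 2 := hgeom.trans (by rw [inv_le_comm₀] <;> linarith)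
    exact_mod_cast this
  have hcomm : Commute (↑U⁻¹ : A) u := by
    refine Commute.units_inv_left ?_
    rw [Units.val_oneSub]
    exact (Commute.one_left u).sub_left ((huv.symm.smul_left _).neg_left)
  have hρ : spectralRadius ℂ (↑U⁻¹ * u) < ‖(-2 : ℂ)‖₊ := by
    calc spectralRadius ℂ (↑U⁻¹ * u) ≤ ‖(↑U⁻¹ : A)‖₊ * spectralRadius ℂ u :=
          spectralRadius_mul_le_of_commute hcomm
      _ ≤ 2 * spectralRadius ℂ u := by gcongr; exact_mod_cast hUinv
      _ < 2 * 1 := ENNReal.mul_lt_mul_right two_ne_zero ENNReal.ofNat_ne_top hu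
      _ = ‖(-2 : ℂ)‖₊ := by simp
  have hunit : IsUnit (2 + ↑U⁻¹ * u) := by
    have := spectrum.mem_resolventSet_iff.mp (spectrum.mem_resolventSet_of_spectralRadius_lt hρ)
    rwa [map_neg, map_ofNat, ← neg_add', IsUnit.neg_iff] at this
  have hfactor : 2 + v + u = U * (2 + ↑U⁻¹ * u) := by
    rw [mul_add, ← mul_assoc, U.mul_inv, one_mul, hU]
  rw [hfactor]
  exact U.isUnit.mul hunit

end Spectral

theorem eq_of_mul_self_eq_of_isUnit_add {R : Type*} [Ring R] {a b : R} (hab : Commute a b)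
    (h : a * a = b * b) (hu : IsUnit (a + b)) : a = b := by
  rw [← sub_eq_zero, ← hu.mul_left_eq_zero]
  calc (a - b) * (a + b) = a * a - b * b + (a * b - b * a) := by noncomm_ring
    _ = 0 := by rw [h, hab.eq, sub_self, sub_self, add_zero]

theorem eq_sqrtOneSub_one_sub_mul_self {A : Type*} [NormedRing A] [NormedAlgebra ℂ A]
    [NormOneClass A] [CompleteSpace A] {a : A} (ha : spectralRadius ℂ (a - 1) < 1)
    (h : ‖1 - a * a‖ ≤ 1) : a = sqrtOneSub (1 - a * a) := by
  set y := sqrtOneSub (1 - a * a)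
  have hay : Commute a y :=
    ((Commute.one_right a).sub_right ((Commute.refl a).mul_right (Commute.refl a))).sqrtOneSub_right
  have hyy : a * a = y * y := by rw [sqrtOneSub_mul_self h, sub_sub_cancel]
  have hunit : IsUnit (a + y) := by
    have := isUnit_two_add_add_of_commute ((hay.sub_left (Commute.one_left y)).sub_right
      (Commute.one_right _)) ha (norm_sqrtOneSub_sub_one_le h)
    rwa [← one_add_one_eq_two, show 1 + 1 + (y - 1) + (a - 1) = a + y by abel] at this
  exact eq_of_mul_self_eq_of_isUnit_add hay hyy hunit

/-- **Esterle's lemma.** If `C` is a cosine family in a unital complex Banach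
algebra with `‖C(2s) - 1‖ ≤ 2` and `ρ(C(s) - 1) < 1`, then
`C(s) = √(1 - (1 - C(2s))/2)`. -/
theorem cosine_sqrt_lemma {A : Type*} [NormedRing A] [NormedAlgebra ℂ A]
    [NormOneClass A] [CompleteSpace A] (C : ℝ → A)
    (hC0 : C 0 = 1)
    (hC : ∀ s t : ℝ, C (t + s) + C (t - s) = 2 * (C t * C s))
    (s : ℝ) (h2s : ‖C (2 * s) - 1‖ ≤ 2)
    (hρ : spectralRadius ℂ (C s - 1) < 1) :
    C s = sqrtOneSub (((2 : ℂ)⁻¹) • (1 - C (2 * s))) := by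
  have hdouble : C (2 * s) = 2 * (C s * C s) - 1 := by
    have h := hC s s
    rw [← two_mul, sub_self, hC0] at h
    exact eq_sub_of_add_eq h
  have hx : (2 : ℂ)⁻¹ • (1 - C (2 * s)) = 1 - C s * C s := by
    rw [hdouble, show (1 : A) - (2 * (C s * C s) - 1) = (2 : ℂ) • (1 - C s * C s) by
      rw [two_smul]; noncomm_ring, smul_smul, inv_mul_cancel₀ two_ne_zero, one_smul]
  have hx_norm : ‖1 - C s * C s‖ ≤ 1 := by
    rw [← hx, norm_smul, norm_inv, Complex.norm_two, norm_sub_rev]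
    linarith
  rw [hx]
  exact eq_sqrtOneSub_one_sub_mul_self hρ hx_norm
end

section
/- Let A be a unital complex Banach algebra and let C : ℝ → A be a cosine family, i.e. C(0) = 1 and C(t+s) + C(t−s) = 2·C(t)·C(s) for all s, t ∈ ℝ. Assume that ρ(C(t) − 1) = 0 for all t ∈ ℝ, where ρ is the spectral radius, and that ‖C(2s) − 1‖ ≤ 2 for some s ∈ ℝ. Then ‖1 − C(s)‖ ≤ 1 − √(1 − ‖1 − C(2s)‖/2) ≤ 1. -/
/-!
With `b = C s - 1`, d'Alembert's equation at `t = s` reads `1 - C (2s) = -2 b (b + 2)`, and `b` is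
quasinilpotent. Put `y = -b (b + 2) / 4`, so `‖y‖ ≤ 1/4`. The Catalan generating function
`S(y) = ∑ catalan n * yⁿ` converges absolutely on `‖y‖ ≤ 1/4` and satisfies `y S² + 1 = S`, so
`w = 2 y S(y)` (the branch of `1 - √(1 - 4y)` vanishing at `0`) solves the same quadratic
`w (w - 2) = -4 y = b (b + 2)`. As `S` has nonnegative coefficients,
`‖w‖ ≤ 2 ‖y‖ S(‖y‖) = 1 - √(1 - 4 ‖y‖) ≤ 1`. Finally `b` and `w` commute, so
`(2 - w + b) (b + w) = 0`, and `2 - w + b` is invertible because `2 - w` is and `b` is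
quasinilpotent; hence `b = -w`.
-/

open scoped ENNReal NNReal
open Filter Finset

section SpectralRadius

variable {A : Type*} [NormedRing A] [NormedAlgebra ℂ A] [NormOneClass A] [CompleteSpace A]

theorem Commute.spectralRadius_mul_le {a b : A} (h : Commute a b) :
    spectralRadius ℂ (a * b) ≤ ‖a‖₊ * spectralRadius ℂ b := by
  refine ge_of_tendsto (ENNReal.Tendsto.const_mul
    (spectrum.pow_nnnorm_pow_one_div_tendsto_nhds_spectralRadius b) (Or.inr ENNReal.coe_ne_top)) ?_
  filter_upwards [eventually_gt_atTop 0] with n hn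
  obtain ⟨k, rfl⟩ := Nat.exists_eq_add_one_of_ne_zero hn.ne'
  have hk : (0 : ℝ) < 1 / (k + 1 : ℕ) := by positivity
  calc spectralRadius ℂ (a * b) ≤ (‖(a * b) ^ (k + 1)‖₊ : ℝ≥0∞) ^ (1 / (k + 1 : ℕ) : ℝ) := by
        simpa using spectrum.spectralRadius_le_pow_nnnorm_pow_one_div ℂ (a * b) k
    _ ≤ ((‖a‖₊ ^ (k + 1) : ℝ≥0) * ‖b ^ (k + 1)‖₊ : ℝ≥0∞) ^ (1 / (k + 1 : ℕ) : ℝ) := by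
        rw [h.mul_pow]
        gcongr
        exact_mod_cast (nnnorm_mul_le _ _).trans (by gcongr; exact nnnorm_pow_le _ _)
    _ = ‖a‖₊ * (‖b ^ (k + 1)‖₊ : ℝ≥0∞) ^ (1 / (k + 1 : ℕ) : ℝ) := by
        rw [ENNReal.mul_rpow_of_nonneg _ _ hk.le, ENNReal.coe_pow, ← ENNReal.rpow_natCast,
          ← ENNReal.rpow_mul, mul_one_div_cancel (by positivity), ENNReal.rpow_one]

theorem Commute.isUnit_add_of_spectralRadius_eq_zero {u b : A} (h : Commute u b) (hu : IsUnit u)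
    (hb : spectralRadius ℂ b = 0) : IsUnit (u + b) := by
  obtain ⟨u, rfl⟩ := hu
  have hc : Commute (-↑u⁻¹ : A) b := (h.units_inv_left).neg_left
  have hρ : spectralRadius ℂ (-↑u⁻¹ * b) < ‖(1 : ℂ)‖₊ := by
    refine hc.spectralRadius_mul_le.trans_lt ?_
    simp [hb]
  have h1 : IsUnit (1 - -↑u⁻¹ * b) := by
    simpa using spectrum.mem_resolventSet_iff.mp (spectrum.mem_resolventSet_of_spectralRadius_lt hρ)
  convert u.isUnit.mul h1 using 1
  simp [mul_add, ← mul_assoc]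

theorem eq_neg_of_mul_add_two_eq_mul_sub_two {b w : A} (hb : spectralRadius ℂ b = 0)
    (hbw : Commute b w) (hw : ‖w‖ < 2) (h : b * (b + 2) = w * (w - 2)) : b = -w := by
  have h2w : IsUnit (2 - w) := by
    simpa only [map_ofNat] using spectrum.mem_resolventSet_iff.mp
      (spectrum.mem_resolventSet_of_norm_lt (k := (2 : ℂ)) (by simpa using hw))
  have hunit : IsUnit (2 - w + b) :=
    ((Commute.ofNat_left 2 b).sub_left hbw.symm).isUnit_add_of_spectralRadius_eq_zero h2w hb
  have hzero : (2 - w + b) * (b + w) = 0 :=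
    calc (2 - w + b) * (b + w) = b * (b + 2) - w * (w - 2) + (b * w - w * b) := by noncomm_ring
      _ = 0 := by rw [h, hbw.eq, sub_self, sub_self, add_zero]
  rw [eq_neg_iff_add_eq_zero]
  exact hunit.mul_right_eq_zero.mp hzero

end SpectralRadius

theorem Finset.sum_range_sum_antidiagonal_mul_le {R : Type*} [CommSemiring R] [PartialOrder R]
    [IsOrderedRing R] {f g : ℕ → R} (hf : ∀ n, 0 ≤ f n) (hg : ∀ n, 0 ≤ g n) (N : ℕ) :
    ∑ n ∈ range N, ∑ kl ∈ antidiagonal n, f kl.1 * g kl.2 ≤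
      (∑ n ∈ range N, f n) * ∑ n ∈ range N, g n := by
  rw [sum_congr rfl fun n _ => Nat.sum_antidiagonal_eq_sum_range_succ (fun i j => f i * g j) n,
    sum_range_diag_flip N (fun i j => f i * g j), sum_mul_sum]
  gcongr with i hi
  · exact fun j _ _ => mul_nonneg (hf i) (hg j)
  · exact Nat.sub_le N i

theorem sum_range_catalan_mul_quarter_pow_le_two (N : ℕ) :
    ∑ n ∈ range N, (catalan n : ℝ) * (1 / 4) ^ n ≤ 2 := by
  set u : ℕ → ℝ := fun n => catalan n * (1 / 4) ^ n
  have hu : ∀ n, 0 ≤ u n := fun n => by positivity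
  have hconv : ∀ n, u (n + 1) = 1 / 4 * ∑ kl ∈ antidiagonal n, u kl.1 * u kl.2 := by
    intro n
    simp only [u, catalan_succ', Nat.cast_sum, mul_sum, sum_mul]
    refine sum_congr rfl fun kl hkl => ?_
    rw [← mem_antidiagonal.mp hkl]
    push_cast
    ring
  induction N with
  | zero => simp
  | succ N ih =>
    have hsum := sum_nonneg fun n (_ : n ∈ range N) => hu n
    calc ∑ n ∈ range (N + 1), u n
        = 1 + 1 / 4 * ∑ n ∈ range N, ∑ kl ∈ antidiagonal n, u kl.1 * u kl.2 := by
          rw [sum_range_succ', add_comm, mul_sum]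
          simp only [hconv, u, catalan_zero]
          norm_num
      _ ≤ 1 + 1 / 4 * ((∑ n ∈ range N, u n) * ∑ n ∈ range N, u n) := by
          gcongr
          exact sum_range_sum_antidiagonal_mul_le hu hu N
      _ ≤ 2 := by nlinarith

section CatalanSum

variable {R : Type*} [NormedRing R]

noncomputable def catalanSum (y : R) : R := ∑' n, (catalan n : R) * y ^ n

theorem Commute.catalanSum_right {x y : R} (h : Commute x y) : Commute x (catalanSum y) :=
  Commute.tsum_right x fun n => (Nat.commute_cast x _).mul_right (h.pow_right n)

variable [NormOneClass R]

theorem norm_catalan_mul_pow_le (y : R) (n : ℕ) :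
    ‖(catalan n : R) * y ^ n‖ ≤ catalan n * ‖y‖ ^ n := by
  refine (norm_mul_le _ _).trans
    (mul_le_mul ?_ (norm_pow_le y n) (norm_nonneg _) (Nat.cast_nonneg _))
  simpa using Nat.norm_cast_le (α := R) (catalan n)

theorem summable_catalan_mul_pow {τ : ℝ} (h0 : 0 ≤ τ) (h : τ ≤ 1 / 4) :
    Summable fun n => (catalan n : ℝ) * τ ^ n :=
  .of_nonneg_of_le (fun _ => by positivity) (fun _ => by gcongr)
    (summable_of_sum_range_le (fun n => by positivity) sum_range_catalan_mul_quarter_pow_le_two)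

theorem summable_norm_catalan_mul_pow {y : R} (hy : ‖y‖ ≤ 1 / 4) :
    Summable fun n => ‖(catalan n : R) * y ^ n‖ :=
  .of_nonneg_of_le (fun _ => norm_nonneg _) (norm_catalan_mul_pow_le y)
    (summable_catalan_mul_pow (norm_nonneg y) hy)

theorem norm_catalanSum_le {y : R} (hy : ‖y‖ ≤ 1 / 4) : ‖catalanSum y‖ ≤ catalanSum ‖y‖ :=
  calc ‖catalanSum y‖ ≤ ∑' n, ‖(catalan n : R) * y ^ n‖ :=
        norm_tsum_le_tsum_norm (summable_norm_catalan_mul_pow hy)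
    _ ≤ catalanSum ‖y‖ := (summable_norm_catalan_mul_pow hy).tsum_le_tsum
        (norm_catalan_mul_pow_le y) (summable_catalan_mul_pow (norm_nonneg y) hy)

theorem catalanSum_le_two {τ : ℝ} (h0 : 0 ≤ τ) (h : τ ≤ 1 / 4) : catalanSum τ ≤ 2 :=
  Real.tsum_le_of_sum_range_le (fun n => by positivity) fun N =>
    (sum_le_sum fun n _ => by gcongr).trans (sum_range_catalan_mul_quarter_pow_le_two N)

theorem mul_catalanSum_sq_add_one [CompleteSpace R] {y : R} (hy : ‖y‖ ≤ 1 / 4) :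
    y * catalanSum y ^ 2 + 1 = catalanSum y := by
  have hs := summable_norm_catalan_mul_pow hy
  have hconv : ∀ n, ∑ kl ∈ antidiagonal n,
      (catalan kl.1 : R) * y ^ kl.1 * (catalan kl.2 * y ^ kl.2) = catalan (n + 1) * y ^ n := by
    intro n
    rw [catalan_succ', Nat.cast_sum, sum_mul]
    refine sum_congr rfl fun kl hkl => ?_
    rw [← mem_antidiagonal.mp hkl, pow_add, Nat.cast_mul,
      ((Nat.commute_cast y _).pow_left kl.1).mul_mul_mul_comm]
  have hshift : Summable fun n => (catalan (n + 1) : R) * y ^ n :=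
    (summable_norm_sum_mul_antidiagonal_of_summable_norm hs hs).of_norm.congr hconv
  rw [catalanSum, sq, tsum_mul_tsum_eq_tsum_sum_antidiagonal_of_summable_norm hs hs,
    tsum_congr hconv, ← hshift.tsum_mul_left, hs.of_norm.tsum_eq_zero_add]
  simp [pow_succ', add_comm, ← mul_assoc, (Nat.commute_cast y _).eq]

theorem two_mul_mul_catalanSum {τ : ℝ} (h0 : 0 ≤ τ) (h : τ ≤ 1 / 4) :
    2 * τ * catalanSum τ = 1 - √(1 - 4 * τ) := by
  have hq := mul_catalanSum_sq_add_one (y := τ) (by rwa [Real.norm_of_nonneg h0])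
  have hS := catalanSum_le_two h0 h
  rw [show 1 - 4 * τ = (1 - 2 * τ * catalanSum τ) ^ 2 by linear_combination (-4 * τ) * hq,
    Real.sqrt_sq (by nlinarith)]
  ring

theorem two_mul_mul_catalanSum_mul_sub_two [CompleteSpace R] {y : R} (hy : ‖y‖ ≤ 1 / 4) :
    2 * y * catalanSum y * (2 * y * catalanSum y - 2) = -(4 * y) := by
  have hc : Commute y (catalanSum y) := (Commute.refl y).catalanSum_right
  calc _ = 4 * (y * (catalanSum y * y) * catalanSum y) - 4 * y * catalanSum y := by noncomm_ring
    _ = 4 * y * (y * catalanSum y ^ 2 + 1 - catalanSum y) - 4 * y := by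
        rw [hc.symm.eq]; noncomm_ring
    _ = -(4 * y) := by rw [mul_catalanSum_sq_add_one hy]; noncomm_ring

theorem norm_two_mul_mul_catalanSum_le {y : R} (hy : ‖y‖ ≤ 1 / 4) :
    ‖2 * y * catalanSum y‖ ≤ 1 - √(1 - 4 * ‖y‖) :=
  calc ‖2 * y * catalanSum y‖ ≤ ‖y + y‖ * ‖catalanSum y‖ := by rw [two_mul]; exact norm_mul_le _ _
    _ ≤ 2 * ‖y‖ * catalanSum ‖y‖ := by
        gcongr
        · exact (norm_add_le y y).trans_eq (two_mul _).symm
        · exact norm_catalanSum_le hy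
    _ = 1 - √(1 - 4 * ‖y‖) := two_mul_mul_catalanSum (norm_nonneg y) hy

end CatalanSum

theorem norm_le_one_sub_sqrt_of_spectralRadius_eq_zero {A : Type*} [NormedRing A]
    [NormedAlgebra ℂ A] [NormOneClass A] [CompleteSpace A] {b : A}
    (hb : spectralRadius ℂ b = 0) (h : ‖b * (b + 2)‖ ≤ 1) :
    ‖b‖ ≤ 1 - √(1 - ‖b * (b + 2)‖) := by
  set y : A := (4⁻¹ : ℂ) • -(b * (b + 2))
  have hy_norm : 4 * ‖y‖ = ‖b * (b + 2)‖ := by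
    rw [norm_smul, norm_neg, norm_inv, Complex.norm_ofNat, mul_inv_cancel_left₀ four_ne_zero]
  have hby : b * (b + 2) = -(4 * y) := by
    simp only [y, ← map_ofNat (algebraMap ℂ A), ← Algebra.smul_def]
    module
  have hcomm : Commute b y := ((Commute.refl b).mul_right
    ((Commute.refl b).add_right (Commute.ofNat_right b 2))).neg_right.smul_right _
  have hw := norm_two_mul_mul_catalanSum_le (y := y) (by linarith)
  rw [hy_norm] at hw
  have hbw : b = -(2 * y * catalanSum y) := eq_neg_of_mul_add_two_eq_mul_sub_two hb
    (((Commute.ofNat_right b 2).mul_right hcomm).mul_right hcomm.catalanSum_right)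
    (by linarith [Real.sqrt_nonneg (1 - ‖b * (b + 2)‖)])
    (hby.trans (two_mul_mul_catalanSum_mul_sub_two (by linarith)).symm)
  exact (congrArg norm hbw).trans_le ((norm_neg _).trans_le hw)

/-- If `C` is a cosine family in a unital complex Banach algebra with
`ρ(C t - 1) = 0` for all `t`, and `‖C (2s) - 1‖ ≤ 2` for some `s`, then
`‖1 - C s‖ ≤ 1 - √(1 - ‖1 - C(2s)‖/2) ≤ 1`. -/
theorem cosine_norm_sqrt_bound {A : Type*} [NormedRing A] [NormedAlgebra ℂ A]
    [NormOneClass A] [CompleteSpace A] (C : ℝ → A)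
    (hC0 : C 0 = 1)
    (hC : ∀ s t : ℝ, C (t + s) + C (t - s) = 2 * (C t * C s))
    (hρ : ∀ t : ℝ, spectralRadius ℂ (C t - 1) = 0)
    (s : ℝ) (h2s : ‖C (2 * s) - 1‖ ≤ 2) :
    ‖1 - C s‖ ≤ 1 - Real.sqrt (1 - ‖1 - C (2 * s)‖ / 2) ∧
    1 - Real.sqrt (1 - ‖1 - C (2 * s)‖ / 2) ≤ 1 := by
  have hdouble : 1 - C (2 * s) = -(2 * ((C s - 1) * (C s - 1 + 2))) := by
    have h := hC s s
    rw [sub_self, hC0, ← two_mul] at h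
    rw [eq_sub_of_add_eq h]
    noncomm_ring
  have hnorm : ‖1 - C (2 * s)‖ / 2 = ‖(C s - 1) * (C s - 1 + 2)‖ := by
    rw [hdouble, norm_neg, ← map_ofNat (algebraMap ℂ A) 2, ← Algebra.smul_def, norm_smul]
    norm_num
  have hle : ‖(C s - 1) * (C s - 1 + 2)‖ ≤ 1 := by
    rw [← hnorm, norm_sub_rev]
    linarith
  refine ⟨?_, by linarith [Real.sqrt_nonneg (1 - ‖1 - C (2 * s)‖ / 2)]⟩
  rw [norm_sub_rev, hnorm]
  exact norm_le_one_sub_sqrt_of_spectralRadius_eq_zero (hρ s) hle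
end

section
/- The scalar sequence c : ℤ → ℝ defined by c(n) = cos(2πn/3) is a discrete cosine family (c(0) = 1 and c(n+m) + c(n−m) = 2·c(n)·c(m) for all n, m ∈ ℤ) which is not identically 1 and satisfies limsup_{n→∞} |c(n) − 1| = 3/2. In particular, the constant 3/2 in the discrete limsup-law for cosine sequences cannot be improved. -/
/-! Every `n ↦ cos (θ n)` is a cosine family by the addition formula. For `θ = 2π/3` its values
are `1` on multiples of `3` and `-1/2` elsewhere, so `|c n - 1| ≤ 3/2` with equality for every `n`
not divisible by `3`, which pins the limsup at `3/2`. -/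

open Real Filter

theorem Filter.limsup_eq_of_eventually_le_of_frequently_ge {ι α : Type*}
    [ConditionallyCompleteLinearOrder α] {f : Filter ι} {u : ι → α} {a : α}
    (hle : ∀ᶠ i in f, u i ≤ a) (hge : ∃ᶠ i in f, a ≤ u i) : limsup u f = a :=
  le_antisymm (limsup_le_of_le (IsCoboundedUnder.of_frequently_ge hge) hle)
    (le_limsup_of_frequently_le hge (isBoundedUnder_of_eventually_le hle))

theorem Real.cos_add_add_cos_sub (x y : ℝ) : cos (x + y) + cos (x - y) = 2 * (cos x * cos y) := by
  rw [cos_add, cos_sub]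
  ring

theorem Real.cos_two_pi_mul_int_div_three (n : ℤ) :
    cos (2 * π * n / 3) = if 3 ∣ n then 1 else -(1 / 2) := by
  have hn : (n : ℝ) = (n % 3 : ℤ) + 3 * (n / 3 : ℤ) := by
    exact_mod_cast (Int.emod_add_mul_ediv n 3).symm
  have hperiod : 2 * π * n / 3 = 2 * π * (n % 3 : ℤ) / 3 + (n / 3 : ℤ) * (2 * π) := by
    rw [hn]; ring
  rw [hperiod, cos_add_int_mul_two_pi]
  simp only [Int.dvd_iff_emod_eq_zero]
  have h0 : 0 ≤ n % 3 := Int.emod_nonneg n (by norm_num)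
  have h3 : n % 3 < 3 := Int.emod_lt_of_pos n (by norm_num)
  interval_cases n % 3
  · simp
  · rw [show 2 * π * ((1 : ℤ) : ℝ) / 3 = π - π / 3 by push_cast; ring, cos_pi_sub,
      cos_pi_div_three]
    norm_num
  · rw [show 2 * π * ((2 : ℤ) : ℝ) / 3 = π / 3 + π by push_cast; ring, cos_add_pi,
      cos_pi_div_three]
    norm_num

theorem Real.abs_cos_two_pi_mul_int_div_three_sub_one (n : ℤ) :
    |cos (2 * π * n / 3) - 1| = if 3 ∣ n then 0 else 3 / 2 := by
  rw [cos_two_pi_mul_int_div_three]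
  split_ifs <;> norm_num

/-- The sequence `c n = cos (2πn/3)` is a discrete cosine family which is not
identically `1` and satisfies `limsup_{n → ∞} |c n - 1| = 3/2`, showing the
optimality of the constant `3/2` in the discrete limsup-law. -/
theorem discrete_limsup_law_optimal :
    (fun n : ℤ => Real.cos (2 * Real.pi * n / 3)) 0 = 1 ∧
    (∀ n m : ℤ, Real.cos (2 * Real.pi * (n + m) / 3) +
        Real.cos (2 * Real.pi * (n - m) / 3) =
        2 * (Real.cos (2 * Real.pi * n / 3) * Real.cos (2 * Real.pi * m / 3))) ∧
    (∃ n : ℤ, Real.cos (2 * Real.pi * n / 3) ≠ 1) ∧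
    Filter.limsup (fun n : ℕ => |Real.cos (2 * Real.pi * n / 3) - 1|)
      Filter.atTop = 3 / 2 := by
  have hnat (n : ℕ) : |cos (2 * π * n / 3) - 1| = if 3 ∣ n then 0 else 3 / 2 := by
    simpa only [show (3 : ℤ) ∣ n ↔ 3 ∣ n by omega, Int.cast_natCast] using
      abs_cos_two_pi_mul_int_div_three_sub_one n
  refine ⟨by simp, fun n m => ?_, ⟨1, ?_⟩, ?_⟩
  · rw [mul_add, add_div, mul_sub, sub_div, cos_add_add_cos_sub]
  · rw [cos_two_pi_mul_int_div_three]
    norm_num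
  · refine limsup_eq_of_eventually_le_of_frequently_ge
      (Eventually.of_forall fun n => ?_) (frequently_atTop.2 fun a => ⟨3 * a + 1, by omega, ?_⟩)
    · rw [hnat]; split_ifs <;> norm_num
    · rw [hnat, if_neg (by omega)]
end
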